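/- Let K be a field of characteristic zero, a ∈ K, and b, m ≥ 1 natural numbers. Let y be a formal power series over K in X with constant coefficient 0 satisfying y = X·(1 + a·y^b). Then for every n ≥ 1: if n ≥ m and b divides n−m, then n · (coefficient of X^n in y^m) = m · C(n, (n−m)/b) · a^((n−m)/b); otherwise the coefficient of X^n in y^m is 0. -/

import Mathlib

/-!
This is Lagrange inversion for `φ(t) = 1 + a tᵇ`: if `y = X φ(y)` then
`n [Xⁿ] yᵐ = m [tⁿ] tᵐ φ(t)ⁿ`, and `[tʲ] φ(t)ⁿ` is read off the binomial theorem.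

Lagrange inversion for a polynomial `φ` goes by strong induction on `n`. Writing `n = m + j`,
`[Xⁿ] yᵐ = [tʲ] φ(y)ᵐ`, and the induction hypothesis turns `j [tʲ] φ(y)ᵐ` into `[tʲ] t (φᵐ)' φʲ`.
Since `(m + j) t (φᵐ)' φʲ = m t (φᵐ⁺ʲ)'` and `[tʲ] t F' = j [tʲ] F`, cancelling `j` closes the
induction.
-/

open scoped Polynomial

namespace Polynomial

variable {R : Type*} [CommSemiring R]

theorem coeff_X_mul_derivative (p : R[X]) (n : ℕ) :
    (X * derivative p).coeff n = n * p.coeff n := by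
  cases n with
  | zero => simp
  | succ n => rw [coeff_X_mul, coeff_derivative, mul_comm]; push_cast; rfl

theorem X_mul_derivative_monomial (n : ℕ) (r : R) :
    X * derivative (monomial n r) = C (r * n) * X ^ n := by
  cases n with
  | zero => simp
  | succ n => rw [derivative_monomial_succ, X_mul_monomial, C_mul_X_pow_eq_monomial]; push_cast; rfl

theorem natCast_mul_X_mul_derivative_pow_mul_pow (φ : R[X]) (m j : ℕ) :
    ((m + j : ℕ) : R[X]) * (X * derivative (φ ^ m) * φ ^ j) =
      (m : R[X]) * (X * derivative (φ ^ (m + j))) := by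
  cases m with
  | zero => simp
  | succ m =>
    rw [show m + 1 + j = m + j + 1 by ring, derivative_pow_succ, derivative_pow_succ]
    simp only [map_add, map_natCast, map_one]
    push_cast
    ring

theorem coeff_one_add_C_mul_X_pow_pow {b : ℕ} (hb : 0 < b) (a : R) (n j : ℕ) :
    ((1 + C a * X ^ b) ^ n).coeff j = if b ∣ j then n.choose (j / b) * a ^ (j / b) else 0 := by
  have h : (1 + C a * X ^ b) ^ n = expand R b (((1 + X) ^ n).comp (C a * X)) := by simp
  rw [h, coeff_expand hb, comp_C_mul_X_coeff, coeff_one_add_X_pow]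

end Polynomial

namespace PowerSeries

variable {R : Type*} [CommSemiring R]

theorem constantCoeff_aeval (y : R⟦X⟧) (p : R[X]) :
    constantCoeff (Polynomial.aeval y p) = p.eval (constantCoeff y) := by
  induction p using Polynomial.induction_on' with
  | add p q hp hq => simp [hp, hq]
  | monomial n r => simp

variable {φ : R[X]} {y : R⟦X⟧}

theorem natCast_mul_coeff_aeval {j : ℕ}
    (h : ∀ k : ℕ, (j : R) * coeff j (y ^ k) = k * (Polynomial.X ^ k * φ ^ j).coeff j) (p : R[X]) :
    (j : R) * coeff j (Polynomial.aeval y p) =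
      (Polynomial.X * Polynomial.derivative p * φ ^ j).coeff j := by
  induction p using Polynomial.induction_on' with
  | add p q hp hq => simp only [map_add, mul_add, hp, hq, add_mul, Polynomial.coeff_add]
  | monomial k r =>
    rw [Polynomial.X_mul_derivative_monomial, Polynomial.aeval_monomial, ← Algebra.smul_def,
      coeff_smul, smul_eq_mul, mul_left_comm, h, mul_assoc, Polynomial.coeff_C_mul]
    ring

theorem natCast_mul_coeff_pow_of_eq_X_mul_aeval [IsDomain R] [CharZero R]
    (hy : y = X * Polynomial.aeval y φ) (n k : ℕ) :
    (n : R) * coeff n (y ^ k) = k * (Polynomial.X ^ k * φ ^ n).coeff n := by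
  induction n using Nat.strong_induction_on generalizing k with
  | _ n ih =>
    rcases Nat.eq_zero_or_pos k with rfl | hk
    · simp
    rcases lt_or_ge n k with hnk | hkn
    · have hX : (X : R⟦X⟧) ^ k ∣ y ^ k := pow_dvd_pow_of_dvd ⟨_, hy⟩ k
      rw [X_pow_dvd_iff.1 hX n hnk, Polynomial.coeff_X_pow_mul', if_neg (by omega), mul_zero,
        mul_zero]
    obtain ⟨j, rfl⟩ := Nat.exists_eq_add_of_le' hkn
    have hyk : y ^ k = X ^ k * Polynomial.aeval y (φ ^ k) := by rw [map_pow, ← mul_pow, ← hy]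
    rw [hyk, coeff_X_pow_mul, Polynomial.coeff_X_pow_mul]
    rcases Nat.eq_zero_or_pos j with rfl | hj
    · have hy0 : constantCoeff y = 0 := by rw [hy, map_mul, constantCoeff_X, zero_mul]
      rw [coeff_zero_eq_constantCoeff_apply, constantCoeff_aeval, hy0,
        ← Polynomial.coeff_zero_eq_eval_zero, zero_add, mul_comm]
    apply mul_left_cancel₀ (Nat.cast_ne_zero.2 hj.ne' : (j : R) ≠ 0)
    calc (j : R) * ((j + k : ℕ) * coeff j (Polynomial.aeval y (φ ^ k)))
        = (k + j : ℕ) * (j * coeff j (Polynomial.aeval y (φ ^ k))) := by push_cast; ring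
      _ = (((k + j : ℕ) : R[X]) *
            (Polynomial.X * Polynomial.derivative (φ ^ k) * φ ^ j)).coeff j := by
        rw [natCast_mul_coeff_aeval (fun i ↦ ih j (by omega) i), Polynomial.coeff_natCast_mul]
      _ = j * (k * (φ ^ (j + k)).coeff j) := by
        rw [Polynomial.natCast_mul_X_mul_derivative_pow_mul_pow, Polynomial.coeff_natCast_mul,
          Polynomial.coeff_X_mul_derivative, add_comm]
        ring

end PowerSeries

open PowerSeries

theorem coeff_pow_of_functional_equation_general {K : Type*} [Field K] [CharZero K]
    (a : K) (b m : ℕ) (hb : 1 ≤ b)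
    (y : PowerSeries K)
    (hy : y = X * (1 + C a * y ^ b)) :
    ∀ n : ℕ, 1 ≤ n →
      if m ≤ n ∧ b ∣ (n - m) then
        (n : K) * coeff n (y ^ m) =
          (m : K) * (Nat.choose n ((n - m) / b) : K) * a ^ ((n - m) / b)
      else coeff n (y ^ m) = 0 := by
  intro n hn
  have hφ : y = X * Polynomial.aeval y (1 + Polynomial.C a * Polynomial.X ^ b) := by
    simpa using hy
  have key := natCast_mul_coeff_pow_of_eq_X_mul_aeval hφ n m
  rw [Polynomial.coeff_X_pow_mul', Polynomial.coeff_one_add_C_mul_X_pow_pow hb, ← ite_and] at key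
  split_ifs at key ⊢
  · rw [key, mul_assoc]
  · rw [mul_zero] at key
    exact (mul_eq_zero.1 key).resolve_left (Nat.cast_ne_zero.2 (by omega))

/-- Let `K` be a field of characteristic zero, `a ∈ K`, `b, m ≥ 1`, and let `y` be
a formal power series over `K` with constant coefficient `0` satisfying
`y = X·(1 + a·y^b)`. Then for every `n ≥ 1`: if `n ≥ m` and `b ∣ n−m`, then
`n · [Xⁿ](y^m) = m · C(n, (n−m)/b) · a^((n−m)/b)`, and otherwise `[Xⁿ](y^m) = 0`. -/
theorem coeff_pow_of_functional_equation {K : Type*} [Field K] [CharZero K]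
    (a : K) (b m : ℕ) (hb : 1 ≤ b) (hm : 1 ≤ m)
    (y : PowerSeries K) (hy0 : constantCoeff y = 0)
    (hy : y = X * (1 + C a * y ^ b)) :
    ∀ n : ℕ, 1 ≤ n →
      if m ≤ n ∧ b ∣ (n - m) then
        (n : K) * coeff n (y ^ m) =
          (m : K) * (Nat.choose n ((n - m) / b) : K) * a ^ ((n - m) / b)
      else coeff n (y ^ m) = 0 :=
  coeff_pow_of_functional_equation_general a b m hb y hy
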